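/- arXiv:math/0703373 — 5 statements merged into one kernel-verified Lean document; each statement's English description precedes it below -/
import Mathlib

section
/- Let n ≥ 1 and let α be a real number with 0 < α ≤ 1. The complex roots of the polynomial (1+s)^n − (1−α)s^n are exactly the n numbers γ_k = −1/(1 − (1−α)^{1/n} e^{2πik/n}) for k = 0, 1, …, n−1 (where (1−α)^{1/n} denotes the nonnegative real n-th root), and every such root satisfies Re(γ_k) ≤ 0. Moreover the root of smallest real part is γ_0 = −1/(1 − (1−α)^{1/n}). -/
/-!
With `β = (1 - α)^{1/n}`, a root `s` satisfies `(1 + s)^n = (β s)^n`, so `1 + s = ζ^k β s` for an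
`n`-th root of unity `ζ^k`, i.e. `s = -1 / (1 - z)` with `|z| = β < 1`. For `|z| ≤ 1` the real part of
`1 / (1 - z)` is nonnegative, and for `|z| < 1` it is at most `1 / (1 - |z|)`, which is attained
at `z = β`, i.e. at `k = 0`.
-/

open Complex

theorem IsPrimitiveRoot.pow_eq_pow_iff_exists_eq_pow_mul {R : Type*} [CommRing R] [IsDomain R]
    {n : ℕ} {ζ : R} (hζ : IsPrimitiveRoot ζ n) (hn : n ≠ 0) {x y : R} :
    x ^ n = y ^ n ↔ ∃ k < n, x = ζ ^ k * y := by
  rw [← Polynomial.mem_nthRoots (Nat.pos_of_ne_zero hn), hζ.nthRoots_eq rfl]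
  simp [eq_comm]

theorem one_add_pow_sub_pow_mul_pow_eq_zero_iff {K : Type*} [Field K] {n : ℕ} {ζ b s : K}
    (hζ : IsPrimitiveRoot ζ n) (hb : b ^ n ≠ 1) :
    (1 + s) ^ n - b ^ n * s ^ n = 0 ↔ ∃ k < n, s = -1 / (1 - b * ζ ^ k) := by
  have hn : n ≠ 0 := by rintro rfl; exact hb (pow_zero b)
  have hden (k : ℕ) : 1 - b * ζ ^ k ≠ 0 := by
    intro h
    apply hb
    have hbζ : b * ζ ^ k = 1 := (sub_eq_zero.mp h).symm
    rw [← one_pow n, ← hbζ, mul_pow, ← pow_mul, mul_comm k, pow_mul, hζ.pow_eq_one, one_pow,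
      mul_one]
  rw [sub_eq_zero, ← mul_pow, hζ.pow_eq_pow_iff_exists_eq_pow_mul hn]
  refine exists_congr fun k => and_congr_right fun _ => ?_
  rw [eq_div_iff (hden k)]
  constructor <;> intro h <;> linear_combination h

theorem re_inv_one_sub_nonneg {z : ℂ} (hz : ‖z‖ ≤ 1) : 0 ≤ (1 - z)⁻¹.re := by
  rw [inv_re, sub_re, one_re]
  exact div_nonneg (sub_nonneg.mpr ((re_le_norm z).trans hz)) (normSq_nonneg _)

theorem re_inv_one_sub_le {z : ℂ} (hz : ‖z‖ < 1) : (1 - z)⁻¹.re ≤ (1 - ‖z‖)⁻¹ := by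
  calc (1 - z)⁻¹.re ≤ ‖(1 - z)⁻¹‖ := re_le_norm _
    _ = ‖1 - z‖⁻¹ := norm_inv _
    _ ≤ (1 - ‖z‖)⁻¹ := by
      gcongr
      simpa using norm_sub_norm_le (1 : ℂ) z

theorem exp_two_pi_mul_div_mul_I_eq_pow (n k : ℕ) :
    exp (2 * Real.pi * k / n * I) = exp (2 * Real.pi * I / n) ^ k := by
  rw [← exp_nat_mul]; ring_nf

/-- For `n ≥ 1` and `0 < α ≤ 1`, the complex roots of
`(1+s)^n − (1−α) s^n` are exactly the `n` numbers
`γ k = −1 / (1 − (1−α)^{1/n} e^{2πik/n})`, `k = 0, …, n−1`; every such root has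
non-positive real part, and the root of smallest real part is `γ 0`. -/
theorem roots_of_cap_body_polynomial
    (n : ℕ) (hn : 1 ≤ n) (α : ℝ) (hα : 0 < α) (hα1 : α ≤ 1)
    (γ : ℕ → ℂ)
    (hγ : ∀ k : ℕ, γ k =
      -1 / (1 - (((1 - α) ^ ((1 : ℝ) / n) : ℝ) : ℂ) *
        Complex.exp (2 * Real.pi * k / n * Complex.I))) :
    ({s : ℂ | (1 + s) ^ n - ((1 : ℂ) - α) * s ^ n = 0} = {s : ℂ | ∃ k < n, s = γ k}) ∧
    (∀ k < n, (γ k).re ≤ 0) ∧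
    (∀ k < n, (γ 0).re ≤ (γ k).re) := by
  have hn0 : n ≠ 0 := by omega
  set β : ℝ := (1 - α) ^ ((1 : ℝ) / n)
  have hβ0 : 0 ≤ β := Real.rpow_nonneg (by linarith) _
  have hβ1 : β < 1 := Real.rpow_lt_one (by linarith) (by linarith) (by positivity)
  have hβn : (β : ℂ) ^ n = 1 - α := by
    have h := Real.rpow_inv_natCast_pow (x := 1 - α) (by linarith) hn0
    rw [← one_div] at h
    exact_mod_cast h
  set ζ := exp (2 * Real.pi * I / n)
  have hζ : IsPrimitiveRoot ζ n := isPrimitiveRoot_exp n hn0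
  have hγζ (k : ℕ) : γ k = -1 / (1 - β * ζ ^ k) := by rw [hγ, exp_two_pi_mul_div_mul_I_eq_pow]
  have hre (k : ℕ) : (γ k).re = -(1 - β * ζ ^ k)⁻¹.re := by rw [hγζ, neg_div, one_div, neg_re]
  have hnorm (k : ℕ) : ‖(β : ℂ) * ζ ^ k‖ = β := by
    rw [norm_mul, norm_pow, hζ.norm'_eq_one hn0, one_pow, mul_one, norm_real,
      Real.norm_of_nonneg hβ0]
  refine ⟨?_, fun k _ => ?_, fun k _ => ?_⟩
  · ext s
    have hβn1 : (β : ℂ) ^ n ≠ 1 := by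
      rw [hβn]
      exact_mod_cast (by linarith : 1 - α ≠ 1)
    rw [Set.mem_ofPred_eq, ← hβn, one_add_pow_sub_pow_mul_pow_eq_zero_iff hζ hβn1]
    simp only [hγζ, Set.mem_ofPred_eq]
  · rw [hre, neg_nonpos]
    exact re_inv_one_sub_nonneg ((hnorm k).trans_le hβ1.le)
  · have hre0 : (γ 0).re = -(1 - β)⁻¹ := by
      rw [hre, pow_zero, mul_one, ← ofReal_one, ← ofReal_sub, ← ofReal_inv, ofReal_re]
    have hle := re_inv_one_sub_le ((hnorm k).trans_lt hβ1)
    rw [hnorm] at hle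
    rw [hre0, hre]
    exact neg_le_neg hle
end

section
/- Let K be a convex body in ℝⁿ and let E be a convex body in ℝⁿ with nonempty interior, and let γ_1, …, γ_n be the complex roots (counted with multiplicity) of the relative Steiner polynomial f(K,E,s). Then |Re(γ_1)| + ⋯ + |Re(γ_n)| ≥ n·r(K;E). -/
open scoped Pointwise ENNReal
open MeasureTheory Finset Polynomial Filter Module Metric Bornology

/-! If `x + rE ⊆ K ⊆ y + RE` (the second homothet exists because `E` has interior points and `K`
is bounded), then by convexity of `E`, `x + (r + ρ)E ⊆ K + ρE ⊆ y + (R + ρ)E`, so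
`vol E · (ρ + r)ⁿ ≤ f(K,E,ρ) ≤ vol E · (ρ + R)ⁿ` for `ρ > 0`. Comparing leading coefficients gives
`W_n = vol E`; then the coefficients of `ρⁿ⁻¹` give `n W_{n-1} ≥ n r vol E`. By Vieta,
`n W_{n-1} = -W_n ∑ γᵢ`, hence `∑ |Re γᵢ| ≥ -∑ Re γᵢ ≥ n r`. -/

noncomputable def steinerPoly {R : Type*} [CommSemiring R] (n : ℕ) (W : ℕ → R) : R[X] :=
  ∑ i ∈ range (n + 1), C (n.choose i * W i) * X ^ i

section SteinerPoly

variable {R : Type*} [CommSemiring R] (n : ℕ) (W : ℕ → R)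

@[simp]
theorem eval_steinerPoly (x : R) :
    (steinerPoly n W).eval x = ∑ i ∈ range (n + 1), n.choose i * W i * x ^ i := by
  simp [steinerPoly, eval_finsetSum]

theorem natDegree_steinerPoly_le : (steinerPoly n W).natDegree ≤ n :=
  natDegree_sum_le_of_forall_le _ _ fun i hi =>
    (natDegree_C_mul_X_pow_le _ i).trans (Nat.lt_succ_iff.mp (mem_range.mp hi))

theorem coeff_steinerPoly {m : ℕ} (hm : m ≤ n) : (steinerPoly n W).coeff m = n.choose m * W m := by
  simp only [steinerPoly, finsetSum_coeff, coeff_C_mul_X_pow]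
  simp [Nat.lt_succ_iff.mpr hm]

theorem coeff_steinerPoly_self : (steinerPoly n W).coeff n = W n := by
  simp [coeff_steinerPoly n W le_rfl]

theorem coeff_steinerPoly_pred (hn : 0 < n) : (steinerPoly n W).coeff (n - 1) = n * W (n - 1) := by
  rw [coeff_steinerPoly n W (Nat.sub_le n 1), Nat.choose_symm hn, Nat.choose_one_right]

theorem natCast_mul_eq_neg_mul_sum_roots_of_steinerPoly_eq {R : Type*} [CommRing R] {n : ℕ}
    (hn : 0 < n) {W : ℕ → R} {γ : Fin n → R} (h : steinerPoly n W = C (W n) * ∏ i, (X - C (γ i))) :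
    n * W (n - 1) = -(W n * ∑ i, γ i) := by
  have hprod := prod_X_sub_C_coeff_card_pred univ γ (by simpa using hn)
  rw [card_univ, Fintype.card_fin] at hprod
  have := congrArg (coeff · (n - 1)) h
  rwa [coeff_steinerPoly_pred n W hn, coeff_C_mul, hprod, mul_neg] at this

end SteinerPoly

namespace Polynomial

theorem natDegree_C_mul_X_add_C_pow_le {R : Type*} [Semiring R] [Nontrivial R] (c r : R) (n : ℕ) :
    (C c * (X + C r) ^ n).natDegree ≤ n :=
  (natDegree_C_mul_le _ _).trans (natDegree_pow_X_add_C n r).le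

variable {𝕜 : Type*} [NormedField 𝕜] [LinearOrder 𝕜] [IsStrictOrderedRing 𝕜] [OrderTopology 𝕜]
  {p q : 𝕜[X]} {m : ℕ}

theorem leadingCoeff_nonneg_of_eventually_eval_nonneg (h : ∀ᶠ x in atTop, 0 ≤ p.eval x) :
    0 ≤ p.leadingCoeff := by
  by_contra! hneg
  rcases le_or_gt p.degree 0 with hdeg | hdeg
  · rw [eq_C_of_degree_le_zero hdeg] at h hneg
    obtain ⟨x, hx⟩ := h.exists
    simp only [eval_C, leadingCoeff_C] at hx hneg
    exact hx.not_gt hneg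
  · obtain ⟨x, hx, hx'⟩ :=
      (h.and ((p.tendsto_atBot_of_leadingCoeff_nonpos hdeg hneg.le).eventually_lt_atBot 0)).exists
    exact hx.not_gt hx'

theorem coeff_nonneg_of_eventually_eval_nonneg (hp : p.natDegree ≤ m)
    (h : ∀ᶠ x in atTop, 0 ≤ p.eval x) : 0 ≤ p.coeff m := by
  rcases hp.lt_or_eq with hlt | rfl
  · rw [coeff_eq_zero_of_natDegree_lt hlt]
  · exact leadingCoeff_nonneg_of_eventually_eval_nonneg h

theorem coeff_le_coeff_of_eventually_eval_le (hp : p.natDegree ≤ m) (hq : q.natDegree ≤ m)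
    (h : ∀ᶠ x in atTop, q.eval x ≤ p.eval x) : q.coeff m ≤ p.coeff m := by
  simpa using coeff_nonneg_of_eventually_eval_nonneg
    ((natDegree_sub_le p q).trans (max_le hp hq)) (h.mono fun x hx => by simpa using hx)

theorem coeff_pred_le_coeff_pred_of_eventually_eval_le (hp : p.natDegree ≤ m)
    (hq : q.natDegree ≤ m) (hm : q.coeff m = p.coeff m)
    (h : ∀ᶠ x in atTop, q.eval x ≤ p.eval x) : q.coeff (m - 1) ≤ p.coeff (m - 1) := by
  have hdeg : (p - q).natDegree ≤ m - 1 :=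
    natDegree_le_pred ((natDegree_sub_le p q).trans (max_le hp hq)) (by simp [hm])
  simpa using coeff_nonneg_of_eventually_eval_nonneg hdeg (h.mono fun x hx => by simpa using hx)

variable {n : ℕ} {c r R : 𝕜}

theorem coeff_eq_of_eventually_between (hp : p.natDegree ≤ n)
    (hlow : ∀ᶠ x in atTop, c * (x + r) ^ n ≤ p.eval x)
    (hup : ∀ᶠ x in atTop, p.eval x ≤ c * (x + R) ^ n) : p.coeff n = c := by
  have hlow' := coeff_le_coeff_of_eventually_eval_le hp (natDegree_C_mul_X_add_C_pow_le c r n)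
    (by simpa using hlow)
  have hup' := coeff_le_coeff_of_eventually_eval_le (natDegree_C_mul_X_add_C_pow_le c R n) hp
    (by simpa using hup)
  simp only [coeff_C_mul, coeff_X_add_C_pow, Nat.sub_self, pow_zero, Nat.choose_self, Nat.cast_one,
    mul_one] at hlow' hup'
  exact le_antisymm hup' hlow'

theorem mul_le_coeff_pred_of_eventually_le (hn : 0 < n) (hp : p.natDegree ≤ n)
    (hc : p.coeff n = c) (hlow : ∀ᶠ x in atTop, c * (x + r) ^ n ≤ p.eval x) :
    c * (n * r) ≤ p.coeff (n - 1) := by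
  have := coeff_pred_le_coeff_pred_of_eventually_eval_le hp (natDegree_C_mul_X_add_C_pow_le c r n)
    (by simp [coeff_X_add_C_pow, hc]) (by simpa using hlow)
  rwa [coeff_C_mul, coeff_X_add_C_pow, Nat.sub_sub_self hn, Nat.choose_symm hn,
    Nat.choose_one_right, pow_one, mul_comm r] at this

end Polynomial

section Geometry

variable {V : Type*} [NormedAddCommGroup V] [NormedSpace ℝ V] {E K : Set V}

theorem Convex.vadd_smul_add_smul (hE : Convex ℝ E) (x : V) {r ρ : ℝ} (hr : 0 ≤ r) (hρ : 0 ≤ ρ) :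
    (x +ᵥ r • E) + ρ • E = x +ᵥ (r + ρ) • E := by
  rw [vadd_add_assoc, hE.add_smul hr hρ]

theorem Bornology.IsBounded.exists_subset_vadd_smul (hK : IsBounded K)
    (hE : (interior E).Nonempty) : ∃ y : V, ∃ R : ℝ, 0 ≤ R ∧ K ⊆ y +ᵥ R • E := by
  obtain ⟨c, hc⟩ := hE
  obtain ⟨ε, hε, hball⟩ := isOpen_iff.mp isOpen_interior c hc
  obtain ⟨M, hM, hKM⟩ := hK.subset_ball_lt 0 0
  have hR : 0 < M / ε := div_pos hM hε
  refine ⟨-((M / ε) • c), M / ε, hR.le, hKM.trans ?_⟩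
  calc ball 0 M = -((M / ε) • c) +ᵥ (M / ε) • ball c ε := by
        rw [_root_.smul_ball hR.ne', vadd_ball, vadd_eq_add, neg_add_cancel,
          Real.norm_of_nonneg hR.le, div_mul_cancel₀ M hε.ne']
    _ ⊆ -((M / ε) • c) +ᵥ (M / ε) • E :=
        Set.vadd_set_mono (Set.smul_set_mono (hball.trans interior_subset))

variable [MeasurableSpace V] [BorelSpace V] [FiniteDimensional ℝ V] (μ : Measure V)
  [μ.IsAddHaarMeasure]

theorem Convex.addHaar_vadd_smul_add_smul (hE : Convex ℝ E) (x : V) {r ρ : ℝ} (hr : 0 ≤ r)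
    (hρ : 0 ≤ ρ) :
    μ ((x +ᵥ r • E) + ρ • E) = ENNReal.ofReal ((r + ρ) ^ finrank ℝ V) * μ E := by
  rw [hE.vadd_smul_add_smul x hr hρ, measure_vadd,
    Measure.addHaar_smul_of_nonneg μ (by positivity)]

variable {a r ρ : ℝ}

theorem Convex.mul_add_pow_le_of_vadd_smul_subset (hE : Convex ℝ E) (hE0 : μ E ≠ 0)
    (hEfin : μ E ≠ ∞) {x : V} (hr : 0 ≤ r) (hxK : x +ᵥ r • E ⊆ K) (hρ : 0 < ρ)
    (ha : μ (K + ρ • E) = ENNReal.ofReal a) : μ.real E * (ρ + r) ^ finrank ℝ V ≤ a := by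
  have hvol := measure_mono (μ := μ) (Set.add_subset_add hxK (subset_refl (ρ • E)))
  rw [hE.addHaar_vadd_smul_add_smul μ x hr hρ.le, ha, ← ENNReal.ofReal_toReal hEfin,
    ← ENNReal.ofReal_mul (by positivity), ENNReal.ofReal_le_ofReal_iff'] at hvol
  have hpos : 0 < (r + ρ) ^ finrank ℝ V * μ.real E :=
    mul_pos (by positivity) (ENNReal.toReal_pos hE0 hEfin)
  rw [add_comm ρ, mul_comm]
  -- `ENNReal.ofReal` clips at `0`; the clipped alternative is excluded by positivity.
  exact hvol.resolve_right hpos.not_ge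

theorem Convex.le_mul_add_pow_of_subset_vadd_smul (hE : Convex ℝ E) (hEfin : μ E ≠ ∞) {y : V}
    {R : ℝ} (hR : 0 ≤ R) (hKy : K ⊆ y +ᵥ R • E) (hρ : 0 ≤ ρ)
    (ha : μ (K + ρ • E) = ENNReal.ofReal a) : a ≤ μ.real E * (ρ + R) ^ finrank ℝ V := by
  have hvol := measure_mono (μ := μ) (Set.add_subset_add hKy (subset_refl (ρ • E)))
  rw [hE.addHaar_vadd_smul_add_smul μ y hR hρ, ha, ← ENNReal.ofReal_toReal hEfin,
    ← ENNReal.ofReal_mul (by positivity), ENNReal.ofReal_le_ofReal_iff (by positivity)] at hvol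
  rwa [add_comm ρ, mul_comm]

end Geometry

theorem steiner_roots_sum_re_ge_inradius_general
    {n : ℕ}
    (K E : Set (EuclideanSpace ℝ (Fin n)))
    (hKcomp : IsCompact K)
    (hEconv : Convex ℝ E) (hEcomp : IsCompact E)
    (hEint : (interior E).Nonempty)
    (W : ℕ → ℝ)
    (hW : ∀ ρ : ℝ, 0 ≤ ρ →
      volume (K + ρ • E) =
        ENNReal.ofReal (∑ i ∈ Finset.range (n + 1), (n.choose i : ℝ) * W i * ρ ^ i))
    (γ : Fin n → ℂ)
    (hfact : ∀ s : ℂ, (∑ i ∈ Finset.range (n + 1), (n.choose i : ℂ) * (W i : ℂ) * s ^ i) =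
      (W n : ℂ) * ∏ i : Fin n, (s - γ i))
    (rKE : ℝ)
    (hr : IsGreatest {r : ℝ | 0 ≤ r ∧ ∃ x : EuclideanSpace ℝ (Fin n), x +ᵥ r • E ⊆ K} rKE) :
    n * rKE ≤ ∑ i : Fin n, |(γ i).re| := by
  obtain ⟨⟨hr0, x, hxK⟩, -⟩ := hr
  rcases n.eq_zero_or_pos with rfl | hn
  · simp
  obtain ⟨y, R, hR, hKy⟩ := hKcomp.isBounded.exists_subset_vadd_smul hEint
  have hE0 : volume E ≠ 0 := (Measure.measure_pos_of_nonempty_interior _ hEint).ne'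
  have hEfin : volume E ≠ ∞ := hEcomp.measure_lt_top.ne
  have hlow : ∀ᶠ ρ in atTop, volume.real E * (ρ + rKE) ^ n ≤ (steinerPoly n W).eval ρ := by
    filter_upwards [eventually_gt_atTop 0] with ρ hρ
    simpa using
      hEconv.mul_add_pow_le_of_vadd_smul_subset volume hE0 hEfin hr0 hxK hρ (hW ρ hρ.le)
  have hup : ∀ᶠ ρ in atTop, (steinerPoly n W).eval ρ ≤ volume.real E * (ρ + R) ^ n := by
    filter_upwards [eventually_ge_atTop 0] with ρ hρ
    simpa using
      hEconv.le_mul_add_pow_of_subset_vadd_smul volume hEfin hR hKy hρ (hW ρ hρ)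
  have hdeg := natDegree_steinerPoly_le n W
  have hWn := coeff_eq_of_eventually_between hdeg hlow hup
  have hWpred := mul_le_coeff_pred_of_eventually_le hn hdeg hWn hlow
  rw [coeff_steinerPoly_self] at hWn
  rw [coeff_steinerPoly_pred n W hn] at hWpred
  have hroots : (n : ℝ) * W (n - 1) = -(volume.real E * ∑ i, (γ i).re) := by
    have h := natCast_mul_eq_neg_mul_sum_roots_of_steinerPoly_eq (W := fun i => (W i : ℂ)) hn
      (Polynomial.funext fun s => by simpa [eval_prod] using hfact s)
    simpa [Complex.re_sum, hWn] using congrArg Complex.re h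
  have hV : 0 < volume.real E := ENNReal.toReal_pos hE0 hEfin
  calc (n : ℝ) * rKE ≤ ∑ i, -(γ i).re := by
        rw [sum_neg_distrib, ← mul_le_mul_iff_right₀ hV, mul_neg, ← hroots]
        exact hWpred
    _ ≤ ∑ i, |(γ i).re| := sum_le_sum fun i _ => neg_le_abs _

/-- If `γ 1, …, γ n` are the complex roots, with multiplicity, of the
relative Steiner polynomial `f(K,E,s)` of a convex body `K` relative to a convex body `E`
with nonempty interior, then `|Re γ 1| + ⋯ + |Re γ n| ≥ n · r(K;E)`. -/
theorem steiner_roots_sum_re_ge_inradius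
    {n : ℕ}
    (K E : Set (EuclideanSpace ℝ (Fin n)))
    (hKconv : Convex ℝ K) (hKcomp : IsCompact K) (hKne : K.Nonempty)
    (hEconv : Convex ℝ E) (hEcomp : IsCompact E) (hEne : E.Nonempty)
    (hEint : (interior E).Nonempty)
    (W : ℕ → ℝ)
    (hW : ∀ ρ : ℝ, 0 ≤ ρ →
      volume (K + ρ • E) =
        ENNReal.ofReal (∑ i ∈ Finset.range (n + 1), (n.choose i : ℝ) * W i * ρ ^ i))
    (γ : Fin n → ℂ)
    (hfact : ∀ s : ℂ, (∑ i ∈ Finset.range (n + 1), (n.choose i : ℂ) * (W i : ℂ) * s ^ i) =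
      (W n : ℂ) * ∏ i : Fin n, (s - γ i))
    (rKE : ℝ)
    (hr : IsGreatest {r : ℝ | 0 ≤ r ∧ ∃ x : EuclideanSpace ℝ (Fin n), x +ᵥ r • E ⊆ K} rKE) :
    n * rKE ≤ ∑ i : Fin n, |(γ i).re| :=
  steiner_roots_sum_re_ge_inradius_general K E hKcomp hEconv hEcomp hEint W hW γ hfact rKE hr
end

section
/- Let K and E be convex bodies in ℝⁿ with nonempty interiors such that E ⊆ K and W_0(K;E) = W_1(K;E) (by Favard's theorem this holds for every p-tangential body K of E with 0 ≤ p ≤ n−1). Then r(K;E) = 1 and there exists a complex root γ of the relative Steiner polynomial f(K,E,s) with Re(γ) ≥ −1 = −r(K;E). -/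
/-!
Since `E ⊆ K`, `r(K;E) ≥ 1`. Conversely, if `x + rE ⊆ K` then `K + ρE` lies in a translate of
`(1 + ρ/r) K`, so `f(K,E,ρ) ≤ W₀ (1 + ρ/r)ⁿ` for `ρ ≥ 0`. Both sides agree at `ρ = 0`, so their
derivatives there satisfy `n W₁ ≤ n W₀ / r`, and `W₀ = W₁ = vol K > 0` forces `r ≤ 1`.

For the roots, `f'(0) / f(0) = n W₁ / W₀ = n` is the sum of `-1/γ` over the roots `γ` of `f`.
If every root had `Re γ < -1`, each term would have real part `< 1`, and as there are at most
`n` roots the sum would have real part `< n`.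
-/

open scoped Pointwise
open MeasureTheory Finset Polynomial

theorem not_isGreatest_setOf_vadd_smul_subset {V : Type*} [Add V] [SMul ℝ V] [Subsingleton V]
    {K : Set V} (hK : K.Nonempty) (E : Set V) (r₀ : ℝ) :
    ¬ IsGreatest {r : ℝ | 0 ≤ r ∧ ∃ x : V, x +ᵥ r • E ⊆ K} r₀ := by
  rintro ⟨⟨hr₀, -⟩, hmax⟩
  have : r₀ + 1 ≤ r₀ := hmax ⟨by linarith, hK.some, by simp [hK.eq_univ]⟩
  linarith

theorem Convex.add_smul_subset_vadd_smul {V : Type*} [AddCommGroup V] [Module ℝ V]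
    {K E : Set V} (hK : Convex ℝ K) {x : V} {r c : ℝ} (hx : x +ᵥ r • E ⊆ K) (hc : 0 ≤ c) :
    K + (c * r) • E ⊆ -(c • x) +ᵥ (1 + c) • K := by
  rintro _ ⟨k, hk, _, ⟨e, he, rfl⟩, rfl⟩
  have hxe : x + r • e ∈ K := hx ⟨r • e, Set.smul_mem_smul_set he, rfl⟩
  refine ⟨k + c • (x + r • e), ?_, ?_⟩
  · rw [hK.add_smul zero_le_one hc, one_smul]
    exact Set.add_mem_add hk (Set.smul_mem_smul_set hxe)
  · simp only [vadd_eq_add, smul_add, mul_smul]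
    abel

theorem le_of_hasDerivAt_of_le_on_Ici {f g : ℝ → ℝ} {f' g' a : ℝ}
    (hf : HasDerivAt f f' a) (hg : HasDerivAt g g' a) (ha : f a = g a)
    (hle : ∀ x, a ≤ x → f x ≤ g x) : f' ≤ g' := by
  have hmin : IsLocalMinOn (g - f) (Set.Ici a) a :=
    IsMinOn.localize fun x hx => by simpa [ha] using hle x hx
  have hone : (1 : ℝ) ∈ posTangentConeAt (Set.Ici a) a :=
    mem_posTangentConeAt_of_segment_subset
      ((segment_subset_Icc (by linarith)).trans Set.Icc_subset_Ici_self)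
  simpa using hmin.hasFDerivWithinAt_nonneg (hg.sub hf).hasFDerivAt.hasFDerivWithinAt hone

theorem Polynomial.coeff_one_le_of_eval_le {P : ℝ[X]} {r : ℝ} {n : ℕ}
    (hle : ∀ ρ, 0 ≤ ρ → P.eval ρ ≤ P.eval 0 * (1 + ρ / r) ^ n) :
    P.coeff 1 ≤ n * P.eval 0 / r := by
  have hP : HasDerivAt (fun ρ => P.eval ρ) (P.coeff 1) 0 := by
    simpa [← coeff_zero_eq_eval_zero, coeff_derivative] using P.hasDerivAt 0
  have hbound : HasDerivAt (fun ρ => P.eval 0 * (1 + ρ / r) ^ n) (n * P.eval 0 / r) 0 := by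
    have h1 : HasDerivAt (fun ρ : ℝ => 1 + ρ / r) (1 / r) 0 :=
      ((hasDerivAt_id' 0).div_const r).const_add 1
    exact ((h1.fun_pow n).const_mul (P.eval 0)).congr_deriv
      (by simp only [zero_div, add_zero, one_pow]; ring)
  exact le_of_hasDerivAt_of_le_on_Ici hP hbound (by simp) hle

section AddHaar

variable {V : Type*} [NormedAddCommGroup V] [NormedSpace ℝ V] [MeasurableSpace V] [BorelSpace V]
  [FiniteDimensional ℝ V] (μ : Measure V) [μ.IsAddHaarMeasure] {K E : Set V}

theorem measure_add_smul_le_of_vadd_smul_subset (hK : Convex ℝ K) {x : V} {r c : ℝ}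
    (hx : x +ᵥ r • E ⊆ K) (hc : 0 ≤ c) :
    μ (K + (c * r) • E) ≤ ENNReal.ofReal ((1 + c) ^ Module.finrank ℝ V) * μ K := by
  calc μ (K + (c * r) • E) ≤ μ (-(c • x) +ᵥ (1 + c) • K) :=
        measure_mono (hK.add_smul_subset_vadd_smul hx hc)
    _ = ENNReal.ofReal ((1 + c) ^ Module.finrank ℝ V) * μ K := by
        rw [measure_vadd, Measure.addHaar_smul_of_nonneg μ (by linarith)]

theorem Convex.le_mul_one_add_div_pow_of_measure_eq (hK : Convex ℝ K) (hE : E.Nonempty)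
    {f : ℝ → ℝ} (hf0 : 0 ≤ f 0) (hμ : ∀ ρ : ℝ, 0 ≤ ρ → μ (K + ρ • E) = ENNReal.ofReal (f ρ))
    {x : V} {r : ℝ} (hr : 0 < r) (hx : x +ᵥ r • E ⊆ K) {ρ : ℝ} (hρ : 0 ≤ ρ) :
    f ρ ≤ f 0 * (1 + ρ / r) ^ Module.finrank ℝ V := by
  have hμK : μ K = ENNReal.ofReal (f 0) := by
    simpa [Set.zero_smul_set hE] using hμ 0 le_rfl
  have h := measure_add_smul_le_of_vadd_smul_subset μ hK hx (div_nonneg hρ hr.le)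
  rw [div_mul_cancel₀ ρ hr.ne', hμ ρ hρ, hμK, ← ENNReal.ofReal_mul (by positivity),
    ENNReal.ofReal_le_ofReal_iff (by positivity)] at h
  linarith

theorem Convex.coeff_one_le_of_measure_add_smul_eq (hK : Convex ℝ K) (hE : E.Nonempty)
    {P : ℝ[X]} (hP0 : 0 ≤ P.eval 0)
    (hμ : ∀ ρ : ℝ, 0 ≤ ρ → μ (K + ρ • E) = ENNReal.ofReal (P.eval ρ))
    {x : V} {r : ℝ} (hr : 0 < r) (hx : x +ᵥ r • E ⊆ K) :
    P.coeff 1 ≤ Module.finrank ℝ V * P.eval 0 / r :=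
  P.coeff_one_le_of_eval_le fun _ hρ => hK.le_mul_one_add_div_pow_of_measure_eq μ hE hP0 hμ hr hx hρ

end AddHaar

theorem Complex.re_inv_neg_lt_one {γ : ℂ} (h : γ.re < -1) : (-γ)⁻¹.re < 1 := by
  have hnormSq : γ.re ^ 2 ≤ Complex.normSq γ := by
    rw [Complex.normSq_apply]; nlinarith [sq_nonneg γ.im]
  rw [Complex.inv_re, Complex.neg_re, Complex.normSq_neg, div_lt_one (by nlinarith)]
  nlinarith

theorem Polynomial.exists_isRoot_neg_one_le_re (P : ℂ[X]) (h0 : P.eval 0 ≠ 0)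
    (hdeg : 0 < P.natDegree) (hlog : (P.natDegree : ℝ) ≤ (P.derivative.eval 0 / P.eval 0).re) :
    ∃ γ, P.IsRoot γ ∧ -1 ≤ γ.re := by
  by_contra! hroots
  have hroots_ne : P.roots ≠ 0 := by
    simpa [← Multiset.card_eq_zero, IsAlgClosed.card_roots_eq_natDegree] using hdeg.ne'
  have hlt : ((P.roots.map fun z => 1 / (0 - z)).sum).re < (P.natDegree : ℝ) := by
    calc ((P.roots.map fun z => 1 / (0 - z)).sum).re
        = (P.roots.map fun z => (-z)⁻¹.re).sum := by
          have := map_multiset_sum Complex.reAddGroupHom (P.roots.map fun z => 1 / (0 - z))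
          simpa [Multiset.map_map, Function.comp_def] using this
      _ < (P.roots.map fun _ => (1 : ℝ)).sum :=
          Multiset.sum_lt_sum_of_nonempty hroots_ne fun z hz =>
            Complex.re_inv_neg_lt_one (hroots z (isRoot_of_mem_roots hz))
      _ = P.natDegree := by simp [IsAlgClosed.card_roots_eq_natDegree]
  rw [← (IsAlgClosed.splits P).eval_derivative_div_eval_of_ne_zero h0] at hlt
  linarith

theorem Polynomial.exists_isRoot_map_ofReal_neg_one_le_re (P : ℝ[X]) (h0 : P.eval 0 ≠ 0)
    (hdeg : 0 < P.natDegree) (hlog : (P.natDegree : ℝ) ≤ P.derivative.eval 0 / P.eval 0) :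
    ∃ γ : ℂ, (P.map Complex.ofRealHom).IsRoot γ ∧ -1 ≤ γ.re :=
  (P.map Complex.ofRealHom).exists_isRoot_neg_one_le_re (by simpa [eval_zero_map] using h0)
    (by rwa [natDegree_map])
    (by simpa [natDegree_map, derivative_map, eval_zero_map, ← Complex.ofReal_div] using hlog)

noncomputable def steinerPolynomial (n : ℕ) (W : ℕ → ℝ) : ℝ[X] :=
  ∑ i ∈ range (n + 1), C ((n.choose i : ℝ) * W i) * X ^ i

theorem eval_steinerPolynomial (n : ℕ) (W : ℕ → ℝ) (ρ : ℝ) :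
    (steinerPolynomial n W).eval ρ = ∑ i ∈ range (n + 1), (n.choose i : ℝ) * W i * ρ ^ i := by
  simp [steinerPolynomial, eval_finsetSum]

theorem eval_map_steinerPolynomial (n : ℕ) (W : ℕ → ℝ) (γ : ℂ) :
    ((steinerPolynomial n W).map Complex.ofRealHom).eval γ =
      ∑ i ∈ range (n + 1), (n.choose i : ℂ) * (W i : ℂ) * γ ^ i := by
  simp [steinerPolynomial, Polynomial.map_sum, eval_finsetSum]

theorem coeff_steinerPolynomial {n k : ℕ} (W : ℕ → ℝ) (hk : k ≤ n) :
    (steinerPolynomial n W).coeff k = n.choose k * W k := by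
  simp only [steinerPolynomial, finsetSum_coeff, coeff_C_mul, coeff_X_pow, mul_ite, mul_one,
    mul_zero, sum_ite_eq]
  exact if_pos (mem_range.mpr (Nat.lt_succ_of_le hk))

theorem natDegree_steinerPolynomial_le (n : ℕ) (W : ℕ → ℝ) :
    (steinerPolynomial n W).natDegree ≤ n :=
  natDegree_sum_le_of_forall_le _ _ fun _ hi =>
    (natDegree_C_mul_X_pow_le _ _).trans (Nat.lt_succ_iff.mp (mem_range.mp hi))

theorem steiner_root_ge_neg_inradius_of_tangential_general
    {n : ℕ}
    (K E : Set (EuclideanSpace ℝ (Fin n)))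
    (hKconv : Convex ℝ K) (hKne : K.Nonempty)
    (hKint : (interior K).Nonempty)
    (hEne : E.Nonempty)
    (hEK : E ⊆ K)
    (W : ℕ → ℝ)
    (hW : ∀ ρ : ℝ, 0 ≤ ρ →
      volume (K + ρ • E) =
        ENNReal.ofReal (∑ i ∈ Finset.range (n + 1), (n.choose i : ℝ) * W i * ρ ^ i))
    (h01 : W 0 = W 1)
    (rKE : ℝ)
    (hr : IsGreatest {r : ℝ | 0 ≤ r ∧ ∃ x : EuclideanSpace ℝ (Fin n), x +ᵥ r • E ⊆ K} rKE) :
    rKE = 1 ∧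
    ∃ γ : ℂ, (∑ i ∈ Finset.range (n + 1), (n.choose i : ℂ) * (W i : ℂ) * γ ^ i) = 0 ∧
      -1 ≤ γ.re := by
  have hn : 0 < n := Nat.pos_of_ne_zero fun hn => by
    subst hn
    exact not_isGreatest_setOf_vadd_smul_subset hKne E rKE hr
  set P := steinerPolynomial n W
  have hvol : ∀ ρ : ℝ, 0 ≤ ρ → volume (K + ρ • E) = ENNReal.ofReal (P.eval ρ) := by
    simpa only [P, eval_steinerPolynomial] using hW
  have hP0 : P.eval 0 = W 0 := by
    simp [P, ← coeff_zero_eq_eval_zero, coeff_steinerPolynomial]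
  have hP1 : P.coeff 1 = n * W 0 := by
    simp [P, coeff_steinerPolynomial W hn, h01]
  have hW0 : 0 < W 0 := by
    have hvolK := hvol 0 le_rfl
    rw [Set.zero_smul_set hEne, add_zero, hP0] at hvolK
    exact ENNReal.ofReal_pos.mp (hvolK ▸ volume.measure_pos_of_nonempty_interior hKint)
  have hr1 : 1 ≤ rKE := hr.2 ⟨zero_le_one, 0, by simpa using hEK⟩
  obtain ⟨x, hx⟩ := hr.1.2
  have hrle : rKE ≤ 1 := by
    have h := hKconv.coeff_one_le_of_measure_add_smul_eq volume hEne (hP0 ▸ hW0.le) hvol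
      (by linarith) hx
    rw [finrank_euclideanSpace_fin, hP1, hP0, le_div_iff₀ (by linarith)] at h
    exact (mul_le_iff_le_one_right (by positivity)).mp h
  refine ⟨le_antisymm hrle hr1, ?_⟩
  have hP'0 : P.derivative.eval 0 = n * W 0 := by
    simp [← coeff_zero_eq_eval_zero, coeff_derivative, hP1]
  obtain ⟨γ, hγ, hre⟩ := P.exists_isRoot_map_ofReal_neg_one_le_re (hP0 ▸ hW0.ne')
    (le_natDegree_of_ne_zero (by rw [hP1]; positivity))
    (by rw [hP'0, hP0, mul_div_cancel_right₀ _ hW0.ne']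
        exact_mod_cast natDegree_steinerPolynomial_le n W)
  exact ⟨γ, by simpa [P, eval_map_steinerPolynomial] using hγ.eq_zero, hre⟩

/-- If `K, E` are convex bodies in `ℝⁿ` with nonempty interiors,
`E ⊆ K` and `W 0 = W 1` (which by Favard's theorem holds for every `p`-tangential body
`K` of `E`), then `r(K;E) = 1` and some complex root `γ` of the relative Steiner
polynomial satisfies `Re γ ≥ -1 = -r(K;E)`. -/
theorem steiner_root_ge_neg_inradius_of_tangential
    {n : ℕ}
    (K E : Set (EuclideanSpace ℝ (Fin n)))
    (hKconv : Convex ℝ K) (hKcomp : IsCompact K) (hKne : K.Nonempty)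
    (hKint : (interior K).Nonempty)
    (hEconv : Convex ℝ E) (hEcomp : IsCompact E) (hEne : E.Nonempty)
    (hEint : (interior E).Nonempty)
    (hEK : E ⊆ K)
    (W : ℕ → ℝ)
    (hW : ∀ ρ : ℝ, 0 ≤ ρ →
      volume (K + ρ • E) =
        ENNReal.ofReal (∑ i ∈ Finset.range (n + 1), (n.choose i : ℝ) * W i * ρ ^ i))
    (h01 : W 0 = W 1)
    (rKE : ℝ)
    (hr : IsGreatest {r : ℝ | 0 ≤ r ∧ ∃ x : EuclideanSpace ℝ (Fin n), x +ᵥ r • E ⊆ K} rKE) :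
    rKE = 1 ∧
    ∃ γ : ℂ, (∑ i ∈ Finset.range (n + 1), (n.choose i : ℂ) * (W i : ℂ) * γ ^ i) = 0 ∧
      -1 ≤ γ.re :=
  steiner_root_ge_neg_inradius_of_tangential_general K E hKconv hKne hKint hEne hEK W hW h01 rKE hr
end

section
/- The polynomial Σ_{i=2}^{15} binom(15,i) μ^i (equivalently, (1+μ)^{15} − 1 − 15μ) has a complex root μ with strictly positive real part. -/
/-!
If every root of a complex polynomial `p` lies in the closed left half-plane, then each factor
`|w - r|` of `|p(w)|` can only shrink when `w` is reflected from the right half-plane across the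
imaginary axis, so `|p(-z̄)| ≤ |p(z)|` whenever `Re z ≥ 0`. For `p(μ) = (1 + μ)^15 - 1 - 15μ`,
an exact evaluation at one point `z` with `Re z > 0` shows `|p(z)| < |p(-z̄)|`, so `p` has a root
with positive real part; by the binomial theorem `p(μ) = ∑_{i=2}^{15} C(15,i) μ^i`.
-/

open Finset Polynomial ComplexConjugate

theorem sum_Icc_two_choose_mul_pow {R : Type*} [CommRing R] (n : ℕ) (x : R) :
    ∑ i ∈ Icc 2 n, (n.choose i : R) * x ^ i = (1 + x) ^ n - 1 - n * x := by
  rcases n with _ | n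
  · simp
  rw [add_comm 1 x, add_pow, sum_range_succ', sum_range_succ', ← Ico_add_one_right_eq_Icc,
    sum_Ico_eq_sum_range]
  simp [add_comm 2, mul_comm]

lemma Complex.norm_neg_conj_sub_le {z r : ℂ} (hz : 0 ≤ z.re) (hr : r.re ≤ 0) :
    ‖-conj z - r‖ ≤ ‖z - r‖ := by
  rw [← sq_le_sq₀ (norm_nonneg _) (norm_nonneg _), Complex.sq_norm, Complex.sq_norm,
    Complex.normSq_apply, Complex.normSq_apply]
  simp only [Complex.sub_re, Complex.sub_im, Complex.neg_re, Complex.neg_im, Complex.conj_re,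
    Complex.conj_im]
  nlinarith [mul_nonneg hz (neg_nonneg.mpr hr)]

namespace Polynomial

lemma norm_eval_neg_conj_le {p : ℂ[X]} (hp : ∀ r ∈ p.roots, r.re ≤ 0) {z : ℂ}
    (hz : 0 ≤ z.re) : ‖p.eval (-conj z)‖ ≤ ‖p.eval z‖ := by
  have norm_prod (s : Multiset ℂ) : ‖s.prod‖ = (s.map (‖·‖)).prod :=
    map_multiset_prod (normHom : ℂ →*₀ ℝ) s
  have hsplit := IsAlgClosed.splits p
  rw [hsplit.eval_eq_prod_roots, hsplit.eval_eq_prod_roots, norm_mul, norm_mul, norm_prod,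
    norm_prod, Multiset.map_map, Multiset.map_map]
  gcongr
  exact Multiset.prod_map_le_prod_map₀ _ _ (fun _ _ => norm_nonneg _) fun r hr =>
    Complex.norm_neg_conj_sub_le hz (hp r hr)

lemma exists_isRoot_re_pos_of_norm_eval_lt {p : ℂ[X]} {z : ℂ} (hz : 0 ≤ z.re)
    (h : ‖p.eval z‖ < ‖p.eval (-conj z)‖) : ∃ r, p.IsRoot r ∧ 0 < r.re := by
  by_contra! hp
  exact h.not_ge (norm_eval_neg_conj_le (fun r hr => hp r (isRoot_of_mem_roots hr)) hz)

/-- The point `(1 + 57i)/100` lies near the root `≈ 0.0043 + 0.5688i`, so `p` is small there,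
while the mirrored point is on the far side of the imaginary axis from that root. -/
lemma norm_eval_one_add_X_pow_fifteen_lt :
    ‖((1 + X) ^ 15 - 1 - 15 * X : ℂ[X]).eval ⟨1 / 100, 57 / 100⟩‖ <
      ‖((1 + X) ^ 15 - 1 - 15 * X : ℂ[X]).eval (-conj ⟨1 / 100, 57 / 100⟩)‖ := by
  simp only [eval_sub, eval_pow, eval_add, eval_one, eval_X, eval_mul, eval_ofNat]
  rw [← sq_lt_sq₀ (norm_nonneg _) (norm_nonneg _), Complex.sq_norm, Complex.sq_norm]
  norm_num [Complex.normSq_apply, pow_succ, Complex.mul_re, Complex.mul_im]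

end Polynomial

/-- The polynomial `∑_{i=2}^{15} C(15,i) μ^i` (equivalently
`(1+μ)^{15} − 1 − 15μ`) has a complex root with strictly positive real part. -/
theorem exists_positive_re_root_dim15 :
    ∃ μ : ℂ, (∑ i ∈ Finset.Icc 2 15, (Nat.choose 15 i : ℂ) * μ ^ i) = 0 ∧ 0 < μ.re := by
  obtain ⟨μ, hroot, hre⟩ :=
    exists_isRoot_re_pos_of_norm_eval_lt (by norm_num) norm_eval_one_add_X_pow_fifteen_lt
  refine ⟨μ, ?_, hre⟩
  simpa [sum_Icc_two_choose_mul_pow] using hroot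
end

section
/- Let 1 ≤ n ≤ 5 and let W_0, W_1, …, W_n be strictly positive real numbers satisfying W_i² ≥ W_{i−1}·W_{i+1} for all 1 ≤ i ≤ n−1. Then the polynomial Σ_{i=0}^n binom(n,i) W_i s^i is a Hurwitz polynomial, i.e. every complex root of it has strictly negative real part. -/
/-!
Suppose `γ = x + iy` with `x ≥ 0` were a root. Expanding around `x`, the polynomial becomes
`∑ C(n,k) V_k t^k` in `t = s - x`, where `V_k = ∑_j C(n-k,j) W_{k+j} x^j`; for a Steiner polynomial
these are the quermassintegrals of the parallel body at distance `x`. The `V_k` are again positive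
and log-concave, so `t = iy` would be a root on the imaginary axis. Its real and imaginary parts
are an even and an odd polynomial in `u = y²` with a common root `u > 0`, and for `n ≤ 5`
eliminating `u` contradicts the log-concavity of `V`.

Log-concavity of `V` reduces, by shifting indices, to `V_0 V_2 ≤ V_1²`. Each coefficient of
`V_1² - V_0 V_2` as a polynomial in `x` is a nonnegative combination of differences
`W_j W_k - W_i W_l` with `i + l = j + k` and `i ≤ j ≤ k`, which are nonnegative for a log-concave `W`.
-/

open Finset

section ParallelQuermass

variable {R S : Type*} [CommSemiring R] [CommSemiring S]

def parallelQuermass (n : ℕ) (W : ℕ → R) (x : R) (k : ℕ) : R :=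
  ∑ j ∈ range (n - k + 1), ((n - k).choose j : R) * W (k + j) * x ^ j

theorem map_parallelQuermass (f : R →+* S) (n : ℕ) (W : ℕ → R) (x : R) (k : ℕ) :
    f (parallelQuermass n W x k) = parallelQuermass n (fun i => f (W i)) (f x) k := by
  simp [parallelQuermass]

theorem parallelQuermass_add (n : ℕ) (W : ℕ → R) (x : R) (k i : ℕ) :
    parallelQuermass n W x (k + i) = parallelQuermass (n - k) (fun j => W (k + j)) x i := by
  simp [parallelQuermass, Nat.sub_sub, add_assoc]

theorem sum_choose_mul_add_pow (n : ℕ) (W : ℕ → R) (x t : R) :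
    ∑ i ∈ range (n + 1), (n.choose i : R) * W i * (x + t) ^ i =
      ∑ k ∈ range (n + 1), (n.choose k : R) * parallelQuermass n W x k * t ^ k := by
  simp_rw [add_comm x t, add_pow, mul_sum, parallelQuermass, mul_sum, sum_mul]
  rw [sum_comm' (t' := range (n + 1)) (s' := fun k => Ico k (n + 1))]
  · refine sum_congr rfl fun k hk => ?_
    rw [sum_Ico_eq_sum_range, show n + 1 - k = n - k + 1 by grind]
    refine sum_congr rfl fun j _ => ?_
    have hchoose : n.choose (k + j) * (k + j).choose k = n.choose k * (n - k).choose j := by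
      rw [Nat.choose_mul (Nat.le_add_right k j), add_tsub_cancel_left]
    calc _ = ((n.choose (k + j) * (k + j).choose k : ℕ) : R) * W (k + j) * x ^ j * t ^ k := by
          rw [add_tsub_cancel_left]; push_cast; ring
      _ = _ := by rw [hchoose]; push_cast; ring
  · intro i k
    simp only [mem_range, mem_Ico]
    omega

end ParallelQuermass

structure IsPosLogConcave (n : ℕ) (W : ℕ → ℝ) : Prop where
  pos : ∀ i ≤ n, 0 < W i
  mul_le_sq : ∀ i, i + 2 ≤ n → W i * W (i + 2) ≤ W (i + 1) ^ 2

namespace IsPosLogConcave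

variable {n : ℕ} {W : ℕ → ℝ} {x : ℝ}

theorem mul_succ_le (hW : IsPosLogConcave n W) {i k : ℕ} (hik : i ≤ k) (hk : k + 1 ≤ n) :
    W i * W (k + 1) ≤ W (i + 1) * W k := by
  induction k, hik using Nat.le_induction with
  | base => rw [mul_comm]
  | succ k hik ih =>
    have hWk := hW.pos k (by omega)
    have hWk1 := hW.pos (k + 1) (by omega)
    refine le_of_mul_le_mul_right ?_ (mul_pos hWk hWk1)
    calc W i * W (k + 1 + 1) * (W k * W (k + 1))
        = (W i * W (k + 1)) * (W k * W (k + 2)) := by ring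
      _ ≤ (W (i + 1) * W k) * W (k + 1) ^ 2 :=
        mul_le_mul (ih (by omega)) (hW.mul_le_sq k (by omega))
          (mul_pos hWk (hW.pos _ (by omega))).le (mul_pos (hW.pos _ (by omega)) hWk).le
      _ = W (i + 1) * W (k + 1) * (W k * W (k + 1)) := by ring

theorem mul_le_mul_of_add_eq (hW : IsPosLogConcave n W) (i j k l : ℕ)
    (hsum : i + l = j + k := by omega) (hij : i ≤ j := by omega) (hjk : j ≤ k := by omega)
    (hl : l ≤ n := by omega) : W i * W l ≤ W j * W k := by
  induction hd : j - i generalizing i l with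
  | zero =>
    obtain rfl : i = j := by omega
    obtain rfl : l = k := by omega
    rfl
  | succ d ih =>
    obtain ⟨l, rfl⟩ : ∃ l', l = l' + 1 := ⟨l - 1, by omega⟩
    exact (hW.mul_succ_le (by omega) hl).trans
      (ih (i + 1) l (by omega) (by omega) (by omega) (by omega))

theorem shift (hW : IsPosLogConcave n W) {k : ℕ} (hk : k ≤ n) :
    IsPosLogConcave (n - k) (fun j => W (k + j)) where
  pos i hi := hW.pos _ (by omega)
  mul_le_sq i hi := by simpa only [add_assoc] using hW.mul_le_sq (k + i) (by omega)

theorem parallelQuermass_pos (hW : IsPosLogConcave n W) (hx : 0 ≤ x) {k : ℕ} (hk : k ≤ n) :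
    0 < parallelQuermass n W x k := by
  refine sum_pos' (fun j hj => ?_) ⟨0, by simp, by simpa using hW.pos k hk⟩
  have := hW.pos (k + j) (by have := mem_range.1 hj; omega)
  positivity

theorem parallelQuermass_mul_le_sq (hW : IsPosLogConcave n W) (h2 : 2 ≤ n) (h5 : n ≤ 5)
    (hx : 0 ≤ x) :
    parallelQuermass n W x 0 * parallelQuermass n W x 2 ≤ parallelQuermass n W x 1 ^ 2 := by
  have scale (s : ℕ) {a b : ℝ} (hab : a ≤ b) : x ^ s * a ≤ x ^ s * b :=
    mul_le_mul_of_nonneg_left hab (pow_nonneg hx s)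
  interval_cases n <;>
    simp only [parallelQuermass, sum_range_succ, sum_range_zero, Nat.choose, Nat.reduceSub,
      Nat.reduceAdd]
  · linear_combination hW.mul_le_mul_of_add_eq 0 1 1 2
  · linear_combination scale 0 (hW.mul_le_mul_of_add_eq 0 1 1 2)
      + scale 1 (hW.mul_le_mul_of_add_eq 0 1 2 3) + scale 2 (hW.mul_le_mul_of_add_eq 1 2 2 3)
  · linear_combination scale 0 (hW.mul_le_mul_of_add_eq 0 1 1 2)
      + 2 * scale 1 (hW.mul_le_mul_of_add_eq 0 1 2 3)
      + 2 * scale 2 (hW.mul_le_mul_of_add_eq 1 2 2 3) + scale 2 (hW.mul_le_mul_of_add_eq 0 2 2 4)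
      + 2 * scale 3 (hW.mul_le_mul_of_add_eq 1 2 3 4) + scale 4 (hW.mul_le_mul_of_add_eq 2 3 3 4)
  · linear_combination scale 0 (hW.mul_le_mul_of_add_eq 0 1 1 2)
      + 3 * scale 1 (hW.mul_le_mul_of_add_eq 0 1 2 3)
      + 3 * scale 2 (hW.mul_le_mul_of_add_eq 1 2 2 3)
      + 3 * scale 2 (hW.mul_le_mul_of_add_eq 0 2 2 4)
      + 7 * scale 3 (hW.mul_le_mul_of_add_eq 1 2 3 4) + scale 3 (hW.mul_le_mul_of_add_eq 0 2 3 5)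
      + 3 * scale 4 (hW.mul_le_mul_of_add_eq 1 3 3 5)
      + 3 * scale 4 (hW.mul_le_mul_of_add_eq 2 3 3 4)
      + 3 * scale 5 (hW.mul_le_mul_of_add_eq 2 3 4 5) + scale 6 (hW.mul_le_mul_of_add_eq 3 4 4 5)

protected theorem parallelQuermass (hW : IsPosLogConcave n W) (hn : n ≤ 5) (hx : 0 ≤ x) :
    IsPosLogConcave n (parallelQuermass n W x) where
  pos k hk := hW.parallelQuermass_pos hx hk
  mul_le_sq i hi := by
    simpa only [← parallelQuermass_add, add_zero] using
      (hW.shift (k := i) (by omega)).parallelQuermass_mul_le_sq (by omega) (by omega) hx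

theorem cubic_even_ne_zero_of_odd_eq_zero (hW : IsPosLogConcave 3 W) {u : ℝ}
    (hodd : 3 * W 1 - W 3 * u = 0) : W 0 - 3 * W 2 * u ≠ 0 := by
  intro heven
  have key : W 0 * W 3 = 9 * (W 1 * W 2) := by
    linear_combination W 3 * heven - 3 * W 2 * hodd
  nlinarith [hW.mul_le_mul_of_add_eq 0 1 2 3,
    mul_pos (hW.pos 1 (by norm_num)) (hW.pos 2 (by norm_num))]

theorem quartic_even_ne_zero_of_odd_eq_zero (hW : IsPosLogConcave 4 W) {u : ℝ}
    (hodd : W 1 - W 3 * u = 0) : W 0 - 6 * W 2 * u + W 4 * u ^ 2 ≠ 0 := by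
  intro heven
  have key : W 0 * W 3 ^ 2 + W 1 ^ 2 * W 4 = 6 * (W 1 * W 2 * W 3) := by
    linear_combination W 3 ^ 2 * heven + (W 4 * (W 1 + W 3 * u) - 6 * W 2 * W 3) * hodd
  have h1 := hW.pos 1 (by norm_num)
  have h2 := hW.pos 2 (by norm_num)
  have h3 := hW.pos 3 (by norm_num)
  nlinarith [mul_le_mul_of_nonneg_right (hW.mul_le_mul_of_add_eq 0 1 2 3) h3.le,
    mul_le_mul_of_nonneg_left (hW.mul_le_mul_of_add_eq 1 2 3 4) h1.le, mul_pos (mul_pos h1 h2) h3]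

theorem quintic_even_ne_zero_of_odd_eq_zero (hW : IsPosLogConcave 5 W) {u : ℝ} (hu : 0 < u)
    (hodd : 5 * W 1 - 10 * W 3 * u + W 5 * u ^ 2 = 0) :
    W 0 - 10 * W 2 * u + 5 * W 4 * u ^ 2 ≠ 0 := by
  intro heven
  set P := 25 * W 1 * W 4 - W 0 * W 5
  set α := 50 * W 3 * W 4 - 10 * W 2 * W 5
  set β := 50 * W 1 * W 2 - 10 * W 0 * W 3
  have hα : α * u = P := by linear_combination W 5 * heven - 5 * W 4 * hodd
  have hβ : P * u = β :=
    mul_right_cancel₀ hu.ne' (by linear_combination 5 * W 1 * heven - W 0 * hodd)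
  have hαβ : α * β = P ^ 2 := by linear_combination P * hα - α * hβ
  -- Log-concavity gives `α ≥ 40 W₃W₄`, `β ≥ 40 W₁W₂` and `W₁W₄ ≤ W₂W₃`, so `αβ ≥ 1600 (W₁W₄)²`,
  -- while `0 < P < 25 W₁W₄`.
  have h0 := hW.pos 0 (by norm_num)
  have h1 := hW.pos 1 (by norm_num)
  have h3 := hW.pos 3 (by norm_num)
  have h4 := hW.pos 4 (by norm_num)
  have h5 := hW.pos 5 (by norm_num)
  nlinarith [hW.mul_le_mul_of_add_eq 0 1 4 5, hW.mul_le_mul_of_add_eq 1 2 3 4,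
    hW.mul_le_mul_of_add_eq 2 3 4 5, hW.mul_le_mul_of_add_eq 0 1 2 3, mul_pos h0 h5,
    mul_pos h1 h4, mul_pos h3 h4, mul_pos h1 (hW.pos 2 (by norm_num))]

theorem sum_choose_mul_ofReal_mul_I_pow_ne_zero (hW : IsPosLogConcave n W) (hn : n ≤ 5) (y : ℝ) :
    ∑ k ∈ range (n + 1), (n.choose k : ℂ) * W k * (y * Complex.I) ^ k ≠ 0 := by
  intro h
  rcases eq_or_ne y 0 with rfl | hy
  · exact (hW.pos 0 (Nat.zero_le n)).ne' (by simpa [sum_range_succ'] using h)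
  have hu : 0 < y ^ 2 := by positivity
  interval_cases n <;>
    simp only [sum_range_succ, sum_range_zero, Nat.choose, Nat.reduceAdd, mul_pow, pow_succ,
      pow_zero, Complex.ext_iff, Complex.add_re, Complex.add_im, Complex.mul_re, Complex.mul_im,
      Complex.ofReal_re, Complex.ofReal_im, Complex.I_re, Complex.I_im, Complex.natCast_re,
      Complex.natCast_im, Complex.one_re, Complex.one_im, Complex.zero_re, Complex.zero_im] at h
  · exact (hW.pos 0 le_rfl).ne' (by linear_combination h.1)
  · exact (hW.pos 0 (by norm_num)).ne' (by linear_combination h.1)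
  · exact mul_ne_zero (hW.pos 1 (by norm_num)).ne' hy (by linear_combination h.2 / 2)
  · exact hW.cubic_even_ne_zero_of_odd_eq_zero (u := y ^ 2)
      (mul_left_cancel₀ hy (by linear_combination h.2)) (by linear_combination h.1)
  · exact hW.quartic_even_ne_zero_of_odd_eq_zero (u := y ^ 2)
      (mul_left_cancel₀ hy (by linear_combination h.2 / 4)) (by linear_combination h.1)
  · exact hW.quintic_even_ne_zero_of_odd_eq_zero hu
      (mul_left_cancel₀ hy (by linear_combination h.2)) (by linear_combination h.1)

end IsPosLogConcave

theorem steiner_polynomial_hurwitz_of_dim_le_five_general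
    (n : ℕ) (hn5 : n ≤ 5)
    (W : ℕ → ℝ) (hpos : ∀ i ≤ n, 0 < W i)
    (hlc : ∀ i : ℕ, 1 ≤ i → i + 1 ≤ n → W (i - 1) * W (i + 1) ≤ W i ^ 2) :
    ∀ γ : ℂ, (∑ i ∈ Finset.range (n + 1), (n.choose i : ℂ) * (W i : ℂ) * γ ^ i) = 0 →
      γ.re < 0 := by
  intro γ hγ
  by_contra! hre
  have hW : IsPosLogConcave n W :=
    ⟨hpos, fun i hi => by simpa using hlc (i + 1) (by omega) (by omega)⟩
  refine (hW.parallelQuermass hn5 hre).sum_choose_mul_ofReal_mul_I_pow_ne_zero hn5 γ.im ?_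
  rw [← hγ]
  conv_rhs => rw [← γ.re_add_im, sum_choose_mul_add_pow]
  refine sum_congr rfl fun k _ => ?_
  rw [← Complex.ofRealHom_eq_coe, map_parallelQuermass]
  rfl

/-- For `1 ≤ n ≤ 5` and strictly positive reals `W 0, …, W n`
satisfying the log-concavity relations `W i ^ 2 ≥ W (i-1) * W (i+1)` for `1 ≤ i ≤ n−1`,
the polynomial `∑_{i=0}^n C(n,i) W i s^i` is a Hurwitz polynomial: every complex root
has strictly negative real part. -/
theorem steiner_polynomial_hurwitz_of_dim_le_five
    (n : ℕ) (hn1 : 1 ≤ n) (hn5 : n ≤ 5)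
    (W : ℕ → ℝ) (hpos : ∀ i ≤ n, 0 < W i)
    (hlc : ∀ i : ℕ, 1 ≤ i → i + 1 ≤ n → W (i - 1) * W (i + 1) ≤ W i ^ 2) :
    ∀ γ : ℂ, (∑ i ∈ Finset.range (n + 1), (n.choose i : ℂ) * (W i : ℂ) * γ ^ i) = 0 →
      γ.re < 0 :=
  steiner_polynomial_hurwitz_of_dim_le_five_general n hn5 W hpos hlc
end
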